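/- arXiv:cs/0606013 — 4 statements merged into one kernel-verified Lean document; each statement's English description precedes it below -/
import Mathlib

section
/- Let F be a finite set of points in ℝ², p ∈ int(conv F), and f_p a closest embracing site for p with r_m = dist(p, f_p). Then among the points of F at distance at most r_m from p, there exist two points lying strictly on opposite sides of the line through p and f_p, or two points such that p lies in the interior of the triangle they form with f_p. In particular there exist f_l, f_r ∈ F with dist(p,f_l), dist(p,f_r) ≤ r_m and p ∈ int(conv{f_l, f_p, f_r}). -/
/-!
Measure directions around `p` with the area form, taking `f_p - p` as reference. Among the
embracing sites strictly counterclockwise of it, let `b` make the largest angle with it. If no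
site `a` strictly clockwise of `f_p - p` put `p` inside the triangle `a f_p b`, every site would
lie in the closed half-plane clockwise of the line `p b` (general position keeps the other sites
off the line `p f_p`). But a point interior to a convex hull lies in no closed half-plane
bounded by a line through it.
-/

abbrev Pt := EuclideanSpace ℝ (Fin 2)

open Module Set

open scoped RealInnerProductSpace

section HalfPlane

variable {E : Type*} [NormedAddCommGroup E] [NormedSpace ℝ E] [FiniteDimensional ℝ E]

theorem exists_lt_of_mem_interior_convexHull {s : Set E} {p : E}
    (hp : p ∈ interior (convexHull ℝ s)) {ℓ : E →ₗ[ℝ] ℝ} (hℓ : ℓ ≠ 0) :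
    ∃ z ∈ s, ℓ p < ℓ z := by
  by_contra! h
  let L := LinearMap.toContinuousLinearMap ℓ
  have hL : L ≠ 0 := fun h0 =>
    hℓ (LinearMap.toContinuousLinearMap.injective (by simpa [L] using h0))
  have hhull : convexHull ℝ s ⊆ L ⁻¹' Iic (ℓ p) :=
    convexHull_min h ((convex_Iic _).linear_preimage ℓ)
  have : L p ∈ interior (Iic (ℓ p)) :=
    interior_mono (image_subset_iff.2 hhull)
      ((L.isOpenMap_of_ne_zero hL).image_interior_subset _ (mem_image_of_mem L hp))
  rw [interior_Iic] at this
  exact lt_irrefl (ℓ p) this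

end HalfPlane

attribute [local instance] FiniteDimensional.of_fact_finrank_eq_two

variable {E : Type*} [NormedAddCommGroup E] [InnerProductSpace ℝ E] [Fact (finrank ℝ E = 2)]
  (o : Orientation ℝ E (Fin 2))

namespace Orientation

local notation "ω" => o.areaForm

theorem areaForm_ne_zero {x : E} (hx : x ≠ 0) : ω x ≠ 0 := fun h => by
  simpa [hx] using congr($h (o.rightAngleRotation x))

theorem areaForm_eq_zero_iff {x y : E} : ω x y = 0 ↔ x = 0 ∨ ∃ r : ℝ, y = r • x := by
  refine ⟨fun h => or_iff_not_imp_left.2 fun hx => ?_, ?_⟩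
  · rcases le_total 0 ⟪x, y⟫ with hxy | hxy
    · obtain ⟨r, -, hr⟩ := ((o.nonneg_inner_and_areaForm_eq_zero_iff_sameRay x y).1
        ⟨hxy, h⟩).exists_nonneg_left hx
      exact ⟨r, hr.symm⟩
    · obtain ⟨r, -, hr⟩ := ((o.nonneg_inner_and_areaForm_eq_zero_iff_sameRay x (-y)).1
        ⟨by simpa using hxy, by simp [h]⟩).exists_nonneg_left hx
      exact ⟨-r, by rw [neg_smul, hr, neg_neg]⟩
  · rintro (rfl | ⟨r, rfl⟩) <;> simp

theorem areaForm_sub_sub_eq_zero_iff_collinear {a b c : E} :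
    ω (b - a) (c - a) = 0 ↔ Collinear ℝ {a, b, c} := by
  rw [collinear_iff_of_mem (mem_insert a _)]
  constructor
  · rw [o.areaForm_eq_zero_iff]
    rintro (hb | ⟨r, hr⟩)
    · refine ⟨c - a, ?_⟩
      rintro z (rfl | rfl | rfl)
      exacts [⟨0, by simp⟩, ⟨0, by simpa [sub_eq_zero] using hb⟩, ⟨1, by simp⟩]
    · refine ⟨b - a, ?_⟩
      rintro z (rfl | rfl | rfl)
      exacts [⟨0, by simp⟩, ⟨1, by simp⟩, ⟨r, by simp [← hr]⟩]
  · rintro ⟨v, hv⟩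
    obtain ⟨r, hr⟩ := hv b (by simp)
    obtain ⟨t, ht⟩ := hv c (by simp)
    rw [hr, ht]
    simp

theorem areaForm_smul_add_areaForm_smul_add_areaForm_smul (x y z : E) :
    ω y z • x + ω z x • y + ω x y • z = 0 := by
  by_cases hx : x = 0
  · simp [hx]
  set v := ω y z • x + ω z x • y + ω x y • z
  have h_inner : ⟪x, v⟫ = 0 := by
    have := o.inner_mul_areaForm_sub x y z
    simp only [v, inner_add_right, real_inner_smul_right, real_inner_self_eq_norm_sq,
      o.areaForm_swap z x]
    linear_combination -this
  have h_area : ω x v = 0 := by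
    simp only [v, map_add, map_smul, smul_eq_mul, areaForm_apply_self, o.areaForm_swap z x]
    ring
  have hnorm : ‖x‖ ^ 2 * ‖v‖ ^ 2 = 0 := by
    simpa [h_inner, h_area] using (o.inner_sq_add_areaForm_sq x v).symm
  simpa [hx] using hnorm

theorem mem_convexHull_of_areaForm_pos {a b c q : E} (hab : 0 < ω (a - q) (b - q))
    (hbc : 0 < ω (b - q) (c - q)) (hca : 0 < ω (c - q) (a - q)) :
    q ∈ convexHull ℝ {a, b, c} := by
  set w : Fin 3 → ℝ := ![ω (b - q) (c - q), ω (c - q) (a - q), ω (a - q) (b - q)]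
  have hw : ∀ i, 0 < w i := by intro i; fin_cases i <;> assumption
  have hsum : 0 < ∑ i, w i := Finset.sum_pos (fun i _ => hw i) Finset.univ_nonempty
  have hq : ∑ i, w i • ![a, b, c] i = (∑ i, w i) • q := by
    have := o.areaForm_smul_add_areaForm_smul_add_areaForm_smul (a - q) (b - q) (c - q)
    simp only [Fin.sum_univ_three, w, Matrix.cons_val_zero, Matrix.cons_val_one,
      Matrix.cons_val_two, Matrix.head_cons, Matrix.tail_cons]
    linear_combination (norm := module) this
  have : q = ∑ i, ((∑ j, w j)⁻¹ * w i) • ![a, b, c] i := by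
    simp only [mul_smul, ← Finset.smul_sum, hq, inv_smul_smul₀ hsum.ne']
  rw [this]
  refine (convex_convexHull ℝ _).sum_mem (fun i _ => by have := hw i; positivity) ?_
    fun i _ => subset_convexHull ℝ _ ?_
  · rw [← Finset.mul_sum, inv_mul_cancel₀ hsum.ne']
  · fin_cases i <;> simp

theorem mem_interior_convexHull_of_areaForm_pos {a b c p : E} (hab : 0 < ω (a - p) (b - p))
    (hbc : 0 < ω (b - p) (c - p)) (hca : 0 < ω (c - p) (a - p)) :
    p ∈ interior (convexHull ℝ {a, b, c}) := by
  have hcont : ∀ x y : E, Continuous fun q : E => ω (x - q) (y - q) := fun x y =>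
    o.areaForm'.continuous₂.comp₂ (continuous_const.sub continuous_id)
      (continuous_const.sub continuous_id)
  let U := {q | 0 < ω (a - q) (b - q) ∧ 0 < ω (b - q) (c - q) ∧ 0 < ω (c - q) (a - q)}
  have hU : IsOpen U := (isOpen_lt continuous_const (hcont a b)).inter
    ((isOpen_lt continuous_const (hcont b c)).inter (isOpen_lt continuous_const (hcont c a)))
  exact interior_maximal (fun q hq => o.mem_convexHull_of_areaForm_pos hq.1 hq.2.1 hq.2.2) hU
    ⟨hab, hbc, hca⟩

theorem exists_forall_areaForm_nonpos {ι : Type*} {s : Finset ι} (hs : s.Nonempty) {v : ι → E}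
    {u : E} (hv : ∀ i ∈ s, 0 < ω u (v i)) : ∃ i ∈ s, ∀ j ∈ s, ω (v i) (v j) ≤ 0 := by
  -- `i` minimises the cotangent of the angle from `u` to `v i`
  obtain ⟨i, hi, hmin⟩ := s.exists_min_image (fun j => ⟪u, v j⟫ / ω u (v j)) hs
  refine ⟨i, hi, fun j hj => ?_⟩
  have hu : 0 < ‖u‖ ^ 2 := by
    have : u ≠ 0 := by rintro rfl; simpa using hv i hi
    positivity
  have key := hmin j hj
  rw [div_le_div_iff₀ (hv i hi) (hv j hj)] at key
  have := o.inner_mul_areaForm_sub u (v i) (v j)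
  nlinarith

theorem exists_areaForm_pos_of_mem_interior_convexHull {S : Finset E} {p f : E}
    (hp : p ∈ interior (convexHull ℝ (S : Set E)))
    (hline : ∀ g ∈ S, ω (f - p) (g - p) = 0 → g = f) :
    ∃ a ∈ S, ∃ b ∈ S, 0 < ω (a - p) (f - p) ∧ 0 < ω (f - p) (b - p) ∧ 0 < ω (b - p) (a - p) := by
  have hfp : f - p ≠ 0 := by
    intro h0
    have hS : (S : Set E) ⊆ {f} := fun g hg => hline g hg (by simp [h0])
    have : Nontrivial E := nontrivial_of_finrank_eq_succ (@Fact.out (finrank ℝ E = 2) _)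
    simpa using interior_mono (convexHull_mono hS) hp
  have hright : (S.filter fun g => 0 < ω (f - p) (g - p)).Nonempty := by
    obtain ⟨z, hz, hlt⟩ := exists_lt_of_mem_interior_convexHull hp (o.areaForm_ne_zero hfp)
    exact ⟨z, Finset.mem_filter.2 ⟨hz, by rwa [map_sub, sub_pos]⟩⟩
  obtain ⟨b, hb, hbmin⟩ := o.exists_forall_areaForm_nonpos hright (v := (· - p))
    fun g hg => (Finset.mem_filter.1 hg).2
  rw [Finset.mem_filter] at hb
  by_contra! hno
  have hb0 : b - p ≠ 0 := by intro h; simpa [h] using hb.2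
  obtain ⟨z, hz, hlt⟩ := exists_lt_of_mem_interior_convexHull hp (o.areaForm_ne_zero hb0)
  rw [← sub_pos, ← map_sub] at hlt
  rcases lt_trichotomy (ω (f - p) (z - p)) 0 with hneg | hzero | hpos
  · have := hno z hz b hb.1 (by rwa [areaForm_swap, neg_pos]) hb.2
    linarith
  · rw [hline z hz hzero, areaForm_swap] at hlt
    linarith [hb.2]
  · linarith [hbmin z (Finset.mem_filter.2 ⟨hz, hpos⟩)]

end Orientation

theorem exists_CET_general (F : Finset Pt) (p f_p : Pt) (hf : f_p ∈ F)
    (hemb : p ∈ interior (convexHull ℝ {g : Pt | g ∈ F ∧ dist p g ≤ dist p f_p}))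
    (hgen : ∀ g ∈ F, ∀ h ∈ F, g ≠ h → ¬ Collinear ℝ ({p, g, h} : Set Pt)) :
    ∃ f_l ∈ F, ∃ f_r ∈ F, dist p f_l ≤ dist p f_p ∧ dist p f_r ≤ dist p f_p ∧
      p ∈ interior (convexHull ℝ ({f_l, f_p, f_r} : Set Pt)) := by
  have : Fact (finrank ℝ Pt = 2) := ⟨finrank_euclideanSpace_fin⟩
  let o : Orientation ℝ Pt (Fin 2) := (EuclideanSpace.basisFun (Fin 2) ℝ).toBasis.orientation
  let S := F.filter fun g => dist p g ≤ dist p f_p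
  have hS : (S : Set Pt) = {g | g ∈ F ∧ dist p g ≤ dist p f_p} := Finset.coe_filter _ _
  have hline : ∀ g ∈ S, o.areaForm (f_p - p) (g - p) = 0 → g = f_p := fun g hg h0 => by
    by_contra hne
    exact hgen f_p hf g (Finset.mem_filter.1 hg).1 (Ne.symm hne)
      (o.areaForm_sub_sub_eq_zero_iff_collinear.1 h0)
  obtain ⟨a, ha, b, hb, hab, hfb, hba⟩ :=
    o.exists_areaForm_pos_of_mem_interior_convexHull (hS ▸ hemb) hline
  rw [Finset.mem_filter] at ha hb
  exact ⟨a, ha.1, b, hb.1, ha.2, hb.2, o.mem_interior_convexHull_of_areaForm_pos hab hfb hba⟩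

/-- Existence of a closest embracing triangle: if `f_p` is a closest embracing
site for `p` (with `F` in general position, no three points collinear with `p`),
then there exist `f_l, f_r ∈ F` at distance at most `r_m = dist p f_p` from `p`
such that `p` lies in the interior of the triangle `f_l f_p f_r`. -/
theorem exists_CET (F : Finset Pt) (p f_p : Pt) (hf : f_p ∈ F)
    (hp : p ∈ interior (convexHull ℝ (F : Set Pt)))
    (hemb : p ∈ interior (convexHull ℝ {g : Pt | g ∈ F ∧ dist p g ≤ dist p f_p}))
    (hmin : ∀ f' ∈ F, dist p f' < dist p f_p →
      p ∉ interior (convexHull ℝ {g : Pt | g ∈ F ∧ dist p g ≤ dist p f'}))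
    (hgen : ∀ g ∈ F, ∀ h ∈ F, g ≠ h → ¬ Collinear ℝ ({p, g, h} : Set Pt)) :
    ∃ f_l ∈ F, ∃ f_r ∈ F, dist p f_l ≤ dist p f_p ∧ dist p f_r ≤ dist p f_p ∧
      p ∈ interior (convexHull ℝ ({f_l, f_p, f_r} : Set Pt)) :=
  exists_CET_general F p f_p hf hemb hgen
end

section
/- Let F be a finite set of points in ℝ² with range r, and let x be a point on an open subsegment s_k of a segment s such that the set F(x) = {f ∈ F : dist(f,x) < r} is the same for all x ∈ s_k (no circle of radius r around a source crosses s_k). Then s_k ⊆ int(conv F(s_k)) if and only if both endpoints of s_k lie in conv F(s_k) and at least one point of s_k lies in int(conv F(s_k)). -/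
open Set

section

variable {𝕜 E : Type*} [Field 𝕜] [LinearOrder 𝕜] [IsStrictOrderedRing 𝕜]
  [AddCommGroup E] [Module 𝕜 E] [TopologicalSpace E] [IsTopologicalAddGroup E]
  [ContinuousConstSMul 𝕜 E] {s : Set E} {a b x : E}

/- Split `(a, b)` at `x` into `(x, a) ∪ {x} ∪ (x, b)`: an open segment from a point of
`interior s` to a point of `closure s` stays in `interior s`. -/
theorem Convex.openSegment_subset_interior_of_mem_interior (hs : Convex 𝕜 s)
    (ha : a ∈ closure s) (hb : b ∈ closure s) (hx : x ∈ openSegment 𝕜 a b)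
    (hxs : x ∈ interior s) : openSegment 𝕜 a b ⊆ interior s := by
  have hx_line : x ∈ range (AffineMap.lineMap a b : 𝕜 → E) := by
    rw [openSegment_eq_image_lineMap] at hx
    exact image_subset_range _ _ hx
  refine (openSegment_subset_union a b hx_line).trans (insert_subset hxs (union_subset ?_ ?_))
  · rw [openSegment_symm]
    exact hs.openSegment_interior_closure_subset_interior hxs ha
  · exact hs.openSegment_interior_closure_subset_interior hxs hb

end

theorem Convex.openSegment_subset_interior_iff_of_isClosed {E : Type*} [AddCommGroup E]
    [Module ℝ E] [TopologicalSpace E] [IsTopologicalAddGroup E] [ContinuousSMul ℝ E]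
    {s : Set E} (hs : Convex ℝ s) (hs_closed : IsClosed s) {a b : E} :
    openSegment ℝ a b ⊆ interior s ↔
      a ∈ s ∧ b ∈ s ∧ ∃ x ∈ openSegment ℝ a b, x ∈ interior s := by
  constructor
  · intro h
    have hseg : segment ℝ a b ⊆ s :=
      segment_subset_closure_openSegment.trans
        (hs_closed.closure_subset_iff.mpr (h.trans interior_subset))
    exact ⟨hseg (left_mem_segment ℝ a b), hseg (right_mem_segment ℝ a b),
      midpoint ℝ a b, midpoint_mem_openSegment a b, h (midpoint_mem_openSegment a b)⟩
  · rintro ⟨ha, hb, x, hx, hxs⟩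
    exact hs.openSegment_subset_interior_of_mem_interior (subset_closure ha) (subset_closure hb)
      hx hxs

theorem openSegment_subset_interior_iff_general (F : Finset Pt) (r : ℝ) (a b : Pt)
    (Fk : Set Pt)
    (hconst : ∀ x ∈ openSegment ℝ a b, {f : Pt | f ∈ F ∧ dist f x < r} = Fk) :
    openSegment ℝ a b ⊆ interior (convexHull ℝ Fk) ↔
      (a ∈ convexHull ℝ Fk ∧ b ∈ convexHull ℝ Fk ∧
        ∃ x ∈ openSegment ℝ a b, x ∈ interior (convexHull ℝ Fk)) := by
  have hFk : Fk ⊆ F := by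
    rw [← hconst _ (midpoint_mem_openSegment (𝕜 := ℝ) a b)]
    exact fun f hf => hf.1
  exact (convex_convexHull ℝ Fk).openSegment_subset_interior_iff_of_isClosed
    ((F.finite_toSet.subset hFk).isClosed_convexHull (𝕜 := ℝ))

/-- Let `s_k = (a, b)` be a nonempty open segment on which the illuminating set
`Fk = {f ∈ F : dist f x < r}` is the same for all `x ∈ s_k`. Then `s_k` is
contained in the interior of `conv Fk` iff both endpoints lie in `conv Fk` and
at least one point of `s_k` lies in the interior of `conv Fk`. -/
theorem openSegment_subset_interior_iff (F : Finset Pt) (r : ℝ) (a b : Pt)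
    (hab : a ≠ b) (Fk : Set Pt)
    (hconst : ∀ x ∈ openSegment ℝ a b, {f : Pt | f ∈ F ∧ dist f x < r} = Fk) :
    openSegment ℝ a b ⊆ interior (convexHull ℝ Fk) ↔
      (a ∈ convexHull ℝ Fk ∧ b ∈ convexHull ℝ Fk ∧
        ∃ x ∈ openSegment ℝ a b, x ∈ interior (convexHull ℝ Fk)) :=
  openSegment_subset_interior_iff_general F r a b Fk hconst
end

section
/- Let F be a finite set of points in ℝ² and s a compact segment with s ⊆ int(conv F). Then MER(F, s) = sup_{x ∈ s} MER(F, x) is attained at some point of s, and s is 1-well illuminated by F with any range r ≥ MER(F, s). -/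
/-- The minimum embracing range of a point. -/
noncomputable def MER (F : Finset Pt) (x : Pt) : ℝ :=
  sInf {r : ℝ | 0 < r ∧ x ∈ interior (convexHull ℝ {f : Pt | f ∈ F ∧ dist f x ≤ r})}

/-!
Only the finitely many distances from `x` to the points of `F` matter, so the infimum defining
`MER F x` is attained: `x` lies in the open set `interior (conv {f ∈ F | dist f x ≤ MER F x})`.
Every `y` in that open set is embraced with range `MER F x + dist x y`, by the triangle
inequality, so `MER F` is upper semicontinuous on `int (conv F)` and therefore attains its
supremum on the compact segment. Any `r ≥ MER F s` is then at least `MER F x` for each `x ∈ s`.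
-/

open Set Topology

theorem csInf_mem_of_forall_exists_mem_finite_le {α : Type*} [ConditionallyCompleteLinearOrder α]
    {S V : Set α} (hV : V.Finite) (hS : S.Nonempty) (h : ∀ r ∈ S, ∃ v ∈ S ∩ V, v ≤ r) :
    sInf S ∈ S := by
  obtain ⟨r, hr⟩ := hS
  obtain ⟨v, hv, -⟩ := h r hr
  obtain ⟨m, hm, hmin⟩ := (S ∩ V).exists_min_image id (hV.inter_of_right S) ⟨v, hv⟩
  have hleast : IsLeast S m :=
    ⟨hm.1, fun r hr => by
      obtain ⟨v, hv, hvr⟩ := h r hr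
      exact (hmin v hv).trans hvr⟩
  exact hleast.csInf_eq ▸ hm.1

section EmbracingRanges

variable {E : Type*} [NormedAddCommGroup E] [NormedSpace ℝ E]

/-- On `Pt`, `MER F x` is by definition `sInf (embracingRanges F x)`. -/
def embracingRanges (F : Finset E) (x : E) : Set ℝ :=
  {r | 0 < r ∧ x ∈ interior (convexHull ℝ {f : E | f ∈ F ∧ dist f x ≤ r})}

variable {F : Finset E} {x : E}

theorem bddBelow_embracingRanges : BddBelow (embracingRanges F x) :=
  ⟨0, fun _ hr => hr.1.le⟩

theorem mem_embracingRanges_of_le {r r' : ℝ} (hr : r ∈ embracingRanges F x) (hrr' : r ≤ r') :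
    r' ∈ embracingRanges F x := by
  refine ⟨hr.1.trans_le hrr', interior_mono (convexHull_mono fun _ hf => ?_) hr.2⟩
  exact ⟨hf.1, hf.2.trans hrr'⟩

theorem embracingRanges_nonempty (hx : x ∈ interior (convexHull ℝ (F : Set E))) :
    (embracingRanges F x).Nonempty := by
  set r := 1 + ∑ f ∈ F, dist f x
  have hall : {f : E | f ∈ F ∧ dist f x ≤ r} = F := by
    ext f
    refine ⟨And.left, fun hf => ⟨hf, ?_⟩⟩
    have := F.single_le_sum (f := (dist · x)) (fun g _ => dist_nonneg) hf
    linarith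
  have hr : 0 < r := by positivity
  exact ⟨r, hr, hall ▸ hx⟩

theorem exists_dist_mem_embracingRanges_le [Nontrivial E] {r : ℝ}
    (hr : r ∈ embracingRanges F x) :
    ∃ f ∈ F, dist f x ∈ embracingRanges F x ∧ dist f x ≤ r := by
  have hne : {g : E | g ∈ F ∧ dist g x ≤ r}.Nonempty := by
    by_contra h
    rw [not_nonempty_iff_eq_empty] at h
    simpa [h] using hr.2
  obtain ⟨f, ⟨hfF, hfr⟩, hfmax⟩ := exists_max_image _ (dist · x)
    (F.finite_toSet.subset fun _ hg => hg.1) hne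
  have hsame : {g : E | g ∈ F ∧ dist g x ≤ dist f x} = {g : E | g ∈ F ∧ dist g x ≤ r} :=
    Subset.antisymm (fun g hg => ⟨hg.1, hg.2.trans hfr⟩) (fun g hg => ⟨hg.1, hfmax g hg⟩)
  have hpos : 0 < dist f x := by
    by_contra! h
    have hsub : {g : E | g ∈ F ∧ dist g x ≤ r} ⊆ {x} :=
      fun g hg => dist_le_zero.1 ((hfmax g hg).trans h)
    have := interior_mono (convexHull_mono hsub) hr.2
    simp [convexHull_singleton, interior_singleton] at this
  exact ⟨f, hfF, ⟨hpos, hsame ▸ hr.2⟩, hfr⟩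

theorem csInf_embracingRanges_mem [Nontrivial E]
    (hx : x ∈ interior (convexHull ℝ (F : Set E))) :
    sInf (embracingRanges F x) ∈ embracingRanges F x :=
  csInf_mem_of_forall_exists_mem_finite_le (F.finite_toSet.image (dist · x))
    (embracingRanges_nonempty hx) fun _ hr => by
      obtain ⟨f, hf, hfT, hfr⟩ := exists_dist_mem_embracingRanges_le hr
      exact ⟨_, ⟨hfT, mem_image_of_mem _ hf⟩, hfr⟩

theorem add_dist_mem_embracingRanges {r : ℝ} {y : E} (hr : 0 < r)
    (hy : y ∈ interior (convexHull ℝ {f : E | f ∈ F ∧ dist f x ≤ r})) :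
    r + dist x y ∈ embracingRanges F y := by
  refine ⟨by positivity, interior_mono (convexHull_mono fun f hf => ?_) hy⟩
  exact ⟨hf.1, (dist_triangle f x y).trans (add_le_add_left hf.2 _)⟩

end EmbracingRanges

section MER

variable {F : Finset Pt} {x : Pt}

theorem MER_mem_embracingRanges (hx : x ∈ interior (convexHull ℝ (F : Set Pt))) :
    MER F x ∈ embracingRanges F x :=
  csInf_embracingRanges_mem hx

theorem MER_le_of_mem_embracingRanges {r : ℝ} (hr : r ∈ embracingRanges F x) : MER F x ≤ r :=
  csInf_le bddBelow_embracingRanges hr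

theorem mem_interior_convexHull_of_MER_le {r : ℝ}
    (hx : x ∈ interior (convexHull ℝ (F : Set Pt))) (hr : MER F x ≤ r) :
    x ∈ interior (convexHull ℝ {f : Pt | f ∈ F ∧ dist f x ≤ r}) :=
  (mem_embracingRanges_of_le (MER_mem_embracingRanges hx) hr).2

theorem upperSemicontinuousOn_MER :
    UpperSemicontinuousOn (MER F) (interior (convexHull ℝ (F : Set Pt))) := by
  intro x hx y hxy
  have hm := MER_mem_embracingRanges hx
  have hU : interior (convexHull ℝ {f : Pt | f ∈ F ∧ dist f x ≤ MER F x}) ∩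
      Metric.ball x (y - MER F x) ∈ 𝓝 x :=
    Filter.inter_mem (isOpen_interior.mem_nhds hm.2) (Metric.ball_mem_nhds x (sub_pos.2 hxy))
  filter_upwards [nhdsWithin_le_nhds hU] with z ⟨hz, hzx⟩
  rw [Metric.mem_ball, dist_comm] at hzx
  calc MER F z ≤ MER F x + dist x z :=
        MER_le_of_mem_embracingRanges (add_dist_mem_embracingRanges hm.1 hz)
    _ < y := by linarith

end MER

/-- If the compact segment `s = [a, b]` lies inside `int (conv F)`, then
`MER F s = sup_{x ∈ s} MER F x` is attained at some point of `s`, and `s` is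
1-well illuminated by `F` with any range `r ≥ MER F s`. -/
theorem MER_segment_attained (F : Finset Pt) (a b : Pt)
    (hs : segment ℝ a b ⊆ interior (convexHull ℝ (F : Set Pt))) :
    (∃ x₀ ∈ segment ℝ a b, MER F x₀ = sSup (MER F '' segment ℝ a b)) ∧
    ∀ r : ℝ, sSup (MER F '' segment ℝ a b) ≤ r →
      ∀ x ∈ segment ℝ a b,
        x ∈ interior (convexHull ℝ {f : Pt | f ∈ F ∧ dist f x ≤ r}) := by
  have hcompact : IsCompact (segment ℝ a b) := by
    simpa only [convexHull_pair] using (toFinite {a, b}).isCompact_convexHull (𝕜 := ℝ)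
  obtain ⟨x₀, hx₀, hmax⟩ := (upperSemicontinuousOn_MER.mono hs).exists_isMaxOn
    ⟨a, left_mem_segment ℝ a b⟩ hcompact
  have hsup : sSup (MER F '' segment ℝ a b) = MER F x₀ :=
    IsGreatest.csSup_eq ⟨mem_image_of_mem _ hx₀, forall_mem_image.2 hmax⟩
  refine ⟨⟨x₀, hx₀, hsup.symm⟩, fun r hr x hx => mem_interior_convexHull_of_MER_le (hs hx) ?_⟩
  exact (hmax hx).trans (hsup ▸ hr)
end

section
/- The E-Voronoi region of a light source need not be connected: there exists a finite set F of points in ℝ² and a source f ∈ F such that E-VR(f, F) = {x ∈ ℝ² : f is the closest embracing site for x} is disconnected. -/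
/-- `f` is the closest embracing site for `x` with respect to `F`. -/
def IsClosestEmbracingSite (F : Finset Pt) (x f : Pt) : Prop :=
  f ∈ F ∧
    x ∈ interior (convexHull ℝ {g : Pt | g ∈ F ∧ dist x g ≤ dist x f}) ∧
    ∀ f' ∈ F, dist x f' < dist x f →
      x ∉ interior (convexHull ℝ {g : Pt | g ∈ F ∧ dist x g ≤ dist x f'})

/-- The E-Voronoi region of `f` with respect to `F`. -/
def EVR (f : Pt) (F : Finset Pt) : Set Pt := {x : Pt | IsClosestEmbracingSite F x f}

/-!
Take the sites `A = (-2, 0)`, `B = (2, 0)`, `C = (0, 3/2)` and the source `f = (0, -1)`.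
The point `(-1, 1/2)` is closer to `A` and `C` than to `f` and lies inside the triangle `ACf`,
while the sites strictly closer to it than `f` all lie on the line `AC`, so its closest
embracing site is `f`; by the reflection `(u, v) ↦ (-u, v)` the same holds for `(1, 1/2)`.
On the `v`-axis, however, `f` never embraces: either `A` and `B` are both farther than `f`,
and the candidate sites `C`, `f` lie on the axis itself, or `v ≥ 3/2`, and the point is not
inside the triangle `ABC`, which contains all the sites. So `E-VR(f)` meets both sides of the
axis but not the axis.
-/

open Set

theorem notMem_interior_convexHull_of_le {E : Type*} [AddCommGroup E] [TopologicalSpace E]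
    [ContinuousAdd E] [Module ℝ E] [ContinuousSMul ℝ E] {ℓ : StrongDual ℝ E} (hℓ : ℓ ≠ 0)
    {S : Set E} {c : ℝ} (hS : ∀ g ∈ S, c ≤ ℓ g) {x : E} (hx : ℓ x ≤ c) :
    x ∉ interior (convexHull ℝ S) := by
  have hsub : convexHull ℝ S ⊆ ℓ ⁻¹' Ici c :=
    convexHull_min hS ((convex_Ici c).is_linear_preimage ℓ.toLinearMap.isLinear)
  intro hmem
  have := interior_mono hsub hmem
  rw [← (ℓ.isOpenMap_of_ne_zero hℓ).preimage_interior_eq_interior_preimage ℓ.continuous,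
    interior_Ici] at this
  exact (not_lt.2 hx) this

theorem subset_interior_convexHull_of_barycentric {ι E : Type*} [Fintype ι] [AddCommGroup E]
    [Module ℝ E] [TopologicalSpace E] {p : ι → E} {w : ι → E → ℝ} (hw : ∀ i, Continuous (w i))
    (hsum : ∀ y, ∑ i, w i y = 1) (hcomb : ∀ y, ∑ i, w i y • p i = y) :
    {y | ∀ i, 0 < w i y} ⊆ interior (convexHull ℝ (range p)) := by
  refine interior_maximal (fun y hy => ?_) ?_
  · rw [← hcomb y]
    exact (convex_convexHull ℝ _).sum_mem (fun i _ => (hy i).le) (hsum y)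
      fun i _ => subset_convexHull ℝ _ (mem_range_self i)
  · rw [ofPred_forall]
    exact isOpen_iInter_of_finite fun i => isOpen_lt continuous_const (hw i)

theorem isClosestEmbracingSite_of_notMem_interior {F : Finset Pt} {x f : Pt} (hf : f ∈ F)
    (hembrace : x ∈ interior (convexHull ℝ {g : Pt | g ∈ F ∧ dist x g ≤ dist x f}))
    (hcloser : x ∉ interior (convexHull ℝ {g : Pt | g ∈ F ∧ dist x g < dist x f})) :
    IsClosestEmbracingSite F x f := by
  refine ⟨hf, hembrace, fun _ _ hlt hx => hcloser (interior_mono (convexHull_mono ?_) hx)⟩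
  exact fun g hg => ⟨hg.1, hg.2.trans_lt hlt⟩

theorem dist_sq_eq_coord (x y : Pt) : dist x y ^ 2 = (x 0 - y 0) ^ 2 + (x 1 - y 1) ^ 2 := by
  rw [EuclideanSpace.dist_eq, Real.sq_sqrt (by positivity), Fin.sum_univ_two, Real.dist_eq,
    Real.dist_eq, sq_abs, sq_abs]

theorem dist_le_dist_vec2_iff {x : Pt} {a b c d : ℝ} :
    dist x !₂[a, b] ≤ dist x !₂[c, d] ↔
      (x 0 - a) ^ 2 + (x 1 - b) ^ 2 ≤ (x 0 - c) ^ 2 + (x 1 - d) ^ 2 := by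
  rw [← sq_le_sq₀ dist_nonneg dist_nonneg, dist_sq_eq_coord, dist_sq_eq_coord]
  rfl

theorem dist_lt_dist_vec2_iff {x : Pt} {a b c d : ℝ} :
    dist x !₂[a, b] < dist x !₂[c, d] ↔
      (x 0 - a) ^ 2 + (x 1 - b) ^ 2 < (x 0 - c) ^ 2 + (x 1 - d) ^ 2 := by
  rw [← sq_lt_sq₀ dist_nonneg dist_nonneg, dist_sq_eq_coord, dist_sq_eq_coord]
  rfl

theorem innerSL_vec2_apply (a b : ℝ) (y : Pt) :
    innerSL ℝ (!₂[a, b] : Pt) y = a * y 0 + b * y 1 := by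
  simp [PiLp.inner_apply, Fin.sum_univ_two, mul_comm]

theorem innerSL_vec2_ne_zero {a b : ℝ} (h : a ≠ 0) : innerSL ℝ (!₂[a, b] : Pt) ≠ 0 :=
  fun h0 => h (by simpa [innerSL_vec2_apply] using congrArg (fun ℓ => ℓ !₂[1, 0]) h0)

theorem LinearIsometryEquiv.mem_interior_convexHull_image_iff {E F : Type*}
    [SeminormedAddCommGroup E] [SeminormedAddCommGroup F] [NormedSpace ℝ E] [NormedSpace ℝ F]
    (φ : E ≃ₗᵢ[ℝ] F) {S : Set E} {x : E} :
    φ x ∈ interior (convexHull ℝ (φ '' S)) ↔ x ∈ interior (convexHull ℝ S) := by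
  have himage : interior (convexHull ℝ (φ '' S)) = φ '' interior (convexHull ℝ S) := by
    rw [← IsLinearMap.image_convexHull (f := φ) φ.toLinearMap.isLinear S]
    exact (φ.toHomeomorph.image_interior _).symm
  rw [himage]
  exact φ.injective.mem_set_image

theorem IsClosestEmbracingSite.map {F : Finset Pt} {x f : Pt} (φ : Pt ≃ₗᵢ[ℝ] Pt)
    (hF : ∀ g, φ g ∈ F ↔ g ∈ F) (h : IsClosestEmbracingSite F x f) :
    IsClosestEmbracingSite F (φ x) (φ f) := by
  have hball (r : ℝ) :
      {g : Pt | g ∈ F ∧ dist (φ x) g ≤ r} = φ '' {g | g ∈ F ∧ dist x g ≤ r} := by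
    ext g
    rw [← φ.apply_symm_apply g, φ.injective.mem_set_image]
    simp only [mem_ofPred_eq, hF, φ.dist_map]
  obtain ⟨hf, hembrace, hmin⟩ := h
  refine ⟨(hF f).2 hf, ?_, fun f' hf' hlt => ?_⟩
  · rwa [φ.dist_map, hball, φ.mem_interior_convexHull_image_iff]
  · obtain ⟨f', rfl⟩ := φ.surjective f'
    rw [φ.dist_map, φ.dist_map] at hlt
    rw [φ.dist_map, hball, φ.mem_interior_convexHull_image_iff]
    exact hmin f' ((hF f').1 hf') hlt

noncomputable def negFirstCoord : Pt ≃ₗᵢ[ℝ] Pt :=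
  LinearIsometryEquiv.piLpCongrRight 2
    fun i => if i = 0 then LinearIsometryEquiv.neg ℝ else LinearIsometryEquiv.refl ℝ ℝ

@[simp] theorem negFirstCoord_vec2 (a b : ℝ) : negFirstCoord !₂[a, b] = !₂[-a, b] := by
  ext i; fin_cases i <;> simp [negFirstCoord, LinearIsometryEquiv.piLpCongrRight_apply]

@[simp] theorem negFirstCoord_negFirstCoord (x : Pt) : negFirstCoord (negFirstCoord x) = x := by
  ext i; fin_cases i <;> simp [negFirstCoord, LinearIsometryEquiv.piLpCongrRight_apply]

noncomputable section

def siteA : Pt := !₂[-2, 0]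
def siteB : Pt := !₂[2, 0]
def siteC : Pt := !₂[0, 3 / 2]
def siteF : Pt := !₂[0, -1]
def sites : Finset Pt := {siteA, siteB, siteC, siteF}

end

theorem mem_sites {g : Pt} : g ∈ sites ↔ g = siteA ∨ g = siteB ∨ g = siteC ∨ g = siteF := by
  simp [sites]

theorem negFirstCoord_mem_sites_iff (g : Pt) : negFirstCoord g ∈ sites ↔ g ∈ sites := by
  have himage : ∀ g ∈ sites, negFirstCoord g ∈ sites := by
    simp only [mem_sites]
    rintro g (rfl | rfl | rfl | rfl) <;> simp [siteA, siteB, siteC, siteF]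
  exact ⟨fun hg => by simpa using himage _ hg, himage g⟩

theorem mem_interior_convexHull_ACF {y : Pt} (h₁ : y 0 < 0) (h₂ : 0 < 2 + y 0 + 2 * y 1)
    (h₃ : 0 < 6 + 3 * y 0 - 4 * y 1) :
    y ∈ interior (convexHull ℝ (range ![siteA, siteC, siteF])) := by
  refine subset_interior_convexHull_of_barycentric
    (w := ![fun y => -y 0 / 2, fun y => (2 + y 0 + 2 * y 1) / 5,
      fun y => (6 + 3 * y 0 - 4 * y 1) / 10])
    (fun i => by fin_cases i <;> simp only [Fin.reduceFinMk, Matrix.cons_val] <;> fun_prop)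
    (fun y => by simp only [Fin.sum_univ_three, Matrix.cons_val]; ring)
    (fun y => ?_) ?_
  · ext j
    fin_cases j <;>
      simp only [Fin.sum_univ_three, Fin.reduceFinMk, Matrix.cons_val, PiLp.add_apply,
        PiLp.smul_apply, smul_eq_mul, siteA, siteC, siteF] <;> ring
  · intro i; fin_cases i <;> simp only [Fin.reduceFinMk, Matrix.cons_val] <;> linarith

theorem left_witness_mem_EVR : (!₂[-1, 1 / 2] : Pt) ∈ EVR siteF sites := by
  refine isClosestEmbracingSite_of_notMem_interior (mem_sites.2 (by tauto)) ?_ ?_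
  · refine interior_mono (convexHull_mono (range_subset_iff.2 fun i => ?_))
      (mem_interior_convexHull_ACF (by simp) (by norm_num) (by norm_num))
    fin_cases i <;> refine ⟨mem_sites.2 (by simp), ?_⟩ <;>
      norm_num [dist_le_dist_vec2_iff, siteA, siteC, siteF]
  · -- the sites strictly closer than `siteF` lie on the line `AC : -3u + 4v = 6`
    refine notMem_interior_convexHull_of_le (innerSL_vec2_ne_zero (a := -3) (b := 4) (by norm_num))
      (c := 6) ?_ (by norm_num [innerSL_vec2_apply])
    rintro g ⟨hg, hd⟩
    rcases mem_sites.1 hg with rfl | rfl | rfl | rfl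
    · norm_num [innerSL_vec2_apply, siteA]
    · norm_num [dist_lt_dist_vec2_iff, siteB, siteF] at hd
    · norm_num [innerSL_vec2_apply, siteC]
    · exact absurd hd (lt_irrefl _)

theorem notMem_EVR_of_coord_zero {x : Pt} (hx : x 0 = 0) : x ∉ EVR siteF sites := by
  rintro ⟨-, hembrace, -⟩
  by_cases hA : dist x siteA ≤ dist x siteF
  · have hx₁ : 3 / 2 ≤ x 1 := by
      rw [siteA, siteF, dist_le_dist_vec2_iff, hx] at hA; nlinarith
    refine notMem_interior_convexHull_of_le (innerSL_vec2_ne_zero (a := -3) (b := -4) (by norm_num))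
      (c := -6) ?_ (by rw [innerSL_vec2_apply, hx]; linarith) hembrace
    rintro g ⟨hg, -⟩
    rcases mem_sites.1 hg with rfl | rfl | rfl | rfl <;>
      norm_num [innerSL_vec2_apply, siteA, siteB, siteC, siteF]
  · have hB : ¬ dist x siteB ≤ dist x siteF := by
      simpa [dist_le_dist_vec2_iff, siteA, siteB, siteF, hx] using hA
    refine notMem_interior_convexHull_of_le (innerSL_vec2_ne_zero (a := 1) (b := 0) one_ne_zero)
      (c := 0) ?_ (by simp [innerSL_vec2_apply, hx]) hembrace
    rintro g ⟨hg, hd⟩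
    rcases mem_sites.1 hg with rfl | rfl | rfl | rfl
    · exact absurd hd hA
    · exact absurd hd hB
    · simp [innerSL_vec2_apply, siteC]
    · simp [innerSL_vec2_apply, siteF]

/-- E-Voronoi regions need not be connected: there is a finite configuration of
light sources and a source `f` whose E-Voronoi region is nonempty and not
preconnected. -/
theorem exists_disconnected_EVR :
    ∃ (F : Finset Pt) (f : Pt), f ∈ F ∧ (EVR f F).Nonempty ∧
      ¬ IsPreconnected (EVR f F) := by
  refine ⟨sites, siteF, mem_sites.2 (by tauto), ⟨_, left_witness_mem_EVR⟩, fun hpre => ?_⟩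
  have right_witness_mem_EVR : (!₂[1, 1 / 2] : Pt) ∈ EVR siteF sites := by
    simpa [EVR, siteF] using IsClosestEmbracingSite.map negFirstCoord negFirstCoord_mem_sites_iff
      left_witness_mem_EVR
  obtain ⟨x, hx, hx₀⟩ := hpre.intermediate_value left_witness_mem_EVR right_witness_mem_EVR
    (f := fun y : Pt => y 0) (by fun_prop) (by norm_num : (0 : ℝ) ∈ Icc (-1) 1)
  exact notMem_EVR_of_coord_zero hx₀ hx
end
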